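/- arXiv:1006.0190 — 3 statements merged into one kernel-verified Lean document; each statement's English description precedes it below -/
import Mathlib

section
/- Let Y and Z be CAT(0) spaces and equip Y × Z with the ℓ² product metric. Let Δ(a,b,c) be a geodesic triangle in Y × Z satisfying the flatness condition: for all t ∈ (0,1), the points e ∈ [a,b], f ∈ [a,c] with d(a,e)=t·d(a,b), d(a,f)=t·d(a,c) satisfy d(e,f)=t·d(b,c). Then the projected triangles Δ(a₁,b₁,c₁) in Y and Δ(a₂,b₂,c₂) in Z (where subscripts denote coordinates) also satisfy this flatness condition; in particular d(e_i,f_i) = t·d(b_i,c_i) for i = 1,2. -/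
open Filter Set

/-- The Euclidean comparison angle at the vertex with adjacent side lengths `a`, `b`
and opposite side length `c`, given by the law of cosines. -/
noncomputable def compAngle (a b c : ℝ) : ℝ :=
  Real.arccos ((a ^ 2 + b ^ 2 - c ^ 2) / (2 * a * b))

/-- `γ` is a unit-speed geodesic segment from `a` to `b`, parameterized on `[0, dist a b]`. -/
def IsGeodesicSeg {X : Type*} [MetricSpace X] (γ : ℝ → X) (a b : X) : Prop :=
  γ 0 = a ∧ γ (dist a b) = b ∧
    ∀ s ∈ Set.Icc (0 : ℝ) (dist a b), ∀ t ∈ Set.Icc (0 : ℝ) (dist a b),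
      dist (γ s) (γ t) = |s - t|

/-- The distance in the Euclidean comparison triangle (with side lengths
`dab`, `dac`, `dbc`) between the comparison points at parameters `s` (on the side
of length `dab`) and `t` (on the side of length `dac`). -/
noncomputable def compDist (dab dac dbc s t : ℝ) : ℝ :=
  Real.sqrt (s ^ 2 + t ^ 2 - 2 * s * t * Real.cos (compAngle dab dac dbc))

/-- `X` is a CAT(0) space: it is geodesic, and every geodesic triangle satisfies the
CAT(0) comparison inequality (stated for pairs of points on the two sides issuing from
a common vertex, which is equivalent to the usual condition). -/
def IsCAT0 (X : Type*) [MetricSpace X] : Prop :=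
  (∀ a b : X, ∃ γ : ℝ → X, IsGeodesicSeg γ a b) ∧
  ∀ (a b c : X) (α β : ℝ → X), IsGeodesicSeg α a b → IsGeodesicSeg β a c →
    ∀ s ∈ Set.Icc (0 : ℝ) (dist a b), ∀ t ∈ Set.Icc (0 : ℝ) (dist a c),
      dist (α s) (β t) ≤ compDist (dist a b) (dist a c) (dist b c) s t

/-!
Projecting a geodesic of the ℓ² product to a factor gives a constant-speed reparametrization
of a geodesic: for three points in order on the product geodesic, the triangle inequality in
each factor together with Cauchy–Schwarz makes Minkowski's inequality in ℝ² an equality, so the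
middle point divides both factor distances in the same ratio. CAT(0) convexity in each factor
then gives `d(e_i, f_i) ≤ t·d(b_i, c_i)`, and since the squares of the left sides add up to
`d(e, f)² = t²·d(b, c)²`, both inequalities are equalities.
-/

lemma minkowski_eq_case {x₁ y₁ x₂ y₂ z₁ z₂ p q : ℝ} (hz₁ : 0 ≤ z₁) (hz₂ : 0 ≤ z₂)
    (hp : 0 ≤ p) (hq : 0 ≤ q) (h₁ : x₁ ^ 2 + y₁ ^ 2 = p ^ 2) (h₂ : x₂ ^ 2 + y₂ ^ 2 = q ^ 2)
    (h : z₁ ^ 2 + z₂ ^ 2 = (p + q) ^ 2) (hx : z₁ ≤ x₁ + x₂) (hy : z₂ ≤ y₁ + y₂) :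
    z₁ = x₁ + x₂ ∧ x₁ * q = x₂ * p := by
  have hcs : x₁ * x₂ + y₁ * y₂ ≤ p * q := by
    nlinarith [sq_nonneg (x₁ * y₂ - x₂ * y₁), mul_nonneg hp hq]
  have hcs_eq : x₁ * x₂ + y₁ * y₂ = p * q := by nlinarith
  have hx_eq : z₁ = x₁ + x₂ := by nlinarith
  refine ⟨hx_eq, ?_⟩
  have hpar : (x₁ * q - x₂ * p) ^ 2 + (y₁ * q - y₂ * p) ^ 2 = 0 := by
    linear_combination q ^ 2 * h₁ + p ^ 2 * h₂ - 2 * p * q * hcs_eq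
  nlinarith [sq_nonneg (x₁ * q - x₂ * p), sq_nonneg (y₁ * q - y₂ * p)]

lemma eq_and_eq_of_sq_add_sq_eq {x y a b : ℝ} (hx : 0 ≤ x) (hy : 0 ≤ y) (hxa : x ≤ a)
    (hyb : y ≤ b) (h : x ^ 2 + y ^ 2 = a ^ 2 + b ^ 2) : x = a ∧ y = b := by
  constructor <;> nlinarith

lemma two_mul_mul_cos_compAngle {a b c : ℝ} (ha : 0 ≤ a) (hb : 0 ≤ b) (hc : c ≤ a + b)
    (habc : |a - b| ≤ c) :
    2 * a * b * Real.cos (compAngle a b c) = a ^ 2 + b ^ 2 - c ^ 2 := by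
  rw [abs_le] at habc
  rcases ha.eq_or_lt with rfl | ha
  · have : c = b := by linarith
    simp [this]
  rcases hb.eq_or_lt with rfl | hb
  · have : c = a := by linarith
    simp [this]
  have hden : 0 < 2 * a * b := by positivity
  rw [compAngle, Real.cos_arccos]
  · field_simp
  · rw [le_div_iff₀ hden]; nlinarith
  · rw [div_le_one hden]; nlinarith

lemma compDist_mul {a b c : ℝ} (ha : 0 ≤ a) (hb : 0 ≤ b) (hc : c ≤ a + b)
    (habc : |a - b| ≤ c) {t : ℝ} (ht : 0 ≤ t) :
    compDist a b c (t * a) (t * b) = t * c := by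
  have hc0 : 0 ≤ c := (abs_nonneg _).trans habc
  rw [compDist, ← Real.sqrt_sq (mul_nonneg ht hc0)]
  congr 1
  linear_combination -t ^ 2 * two_mul_mul_cos_compAngle ha hb hc habc

lemma WithLp.prod_dist_sq_eq_of_L2 {Y Z : Type*} [MetricSpace Y] [MetricSpace Z]
    (p q : WithLp 2 (Y × Z)) :
    dist p q ^ 2 = dist p.ofLp.1 q.ofLp.1 ^ 2 + dist p.ofLp.2 q.ofLp.2 ^ 2 := by
  rw [WithLp.prod_dist_eq_add (by norm_num), ← Real.rpow_natCast _ 2,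
    ← Real.rpow_mul (by positivity)]
  norm_num

section Geodesic

variable {X Y Z : Type*} [MetricSpace X] [MetricSpace Y] [MetricSpace Z]

lemma IsCAT0.dist_le (hX : IsCAT0 X) {a b c : X} {α β : ℝ → X}
    (hα : IsGeodesicSeg α a b) (hβ : IsGeodesicSeg β a c) {t : ℝ} (ht : t ∈ Icc (0 : ℝ) 1) :
    dist (α (t * dist a b)) (β (t * dist a c)) ≤ t * dist b c := by
  have hmem : ∀ d : ℝ, 0 ≤ d → t * d ∈ Icc 0 d := fun d hd =>
    ⟨mul_nonneg ht.1 hd, mul_le_of_le_one_left hd ht.2⟩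
  have h := hX.2 a b c α β hα hβ _ (hmem _ dist_nonneg) _ (hmem _ dist_nonneg)
  rwa [compDist_mul dist_nonneg dist_nonneg (dist_triangle_left b c a)
    (by simpa only [dist_comm a] using abs_dist_sub_le b c a) ht.1] at h

lemma dist_eq_add_and_mul_eq_of_sq_dist_add_sq_dist {y₁ y₂ y₃ : Y} {z₁ z₂ z₃ : Z} {p q : ℝ}
    (hp : 0 ≤ p) (hq : 0 ≤ q) (h₁₂ : dist y₁ y₂ ^ 2 + dist z₁ z₂ ^ 2 = p ^ 2)
    (h₂₃ : dist y₂ y₃ ^ 2 + dist z₂ z₃ ^ 2 = q ^ 2)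
    (h₁₃ : dist y₁ y₃ ^ 2 + dist z₁ z₃ ^ 2 = (p + q) ^ 2) :
    dist y₁ y₃ = dist y₁ y₂ + dist y₂ y₃ ∧ dist y₁ y₂ * q = dist y₂ y₃ * p :=
  minkowski_eq_case dist_nonneg dist_nonneg hp hq h₁₂ h₂₃ h₁₃ (dist_triangle _ _ _)
    (dist_triangle _ _ _)

lemma exists_dist_eq_mul_of_sq_dist_add_sq_dist {f : ℝ → Y} {g : ℝ → Z} {D : ℝ}
    (hfg : ∀ s ∈ Icc 0 D, ∀ t ∈ Icc 0 D,
      dist (f s) (f t) ^ 2 + dist (g s) (g t) ^ 2 = (s - t) ^ 2) :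
    ∃ k, 0 ≤ k ∧ ∀ s ∈ Icc 0 D, ∀ t ∈ Icc 0 D, dist (f s) (f t) = k * |s - t| := by
  rcases le_or_gt D 0 with hD | hD
  · refine ⟨0, le_rfl, fun s hs t ht => ?_⟩
    obtain rfl : s = t := by linarith [hs.1, hs.2, ht.1, ht.2]
    simp
  have h0 : (0 : ℝ) ∈ Icc 0 D := ⟨le_rfl, hD.le⟩
  have hsplit : ∀ s ∈ Icc 0 D, ∀ t ∈ Icc 0 D, s ≤ t →
      dist (f 0) (f t) = dist (f 0) (f s) + dist (f s) (f t) ∧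
        dist (f 0) (f s) * (t - s) = dist (f s) (f t) * s := fun s hs t ht hst =>
    dist_eq_add_and_mul_eq_of_sq_dist_add_sq_dist hs.1 (sub_nonneg.2 hst)
      (by simpa using hfg 0 h0 s hs) (by linear_combination hfg s hs t ht)
      (by simpa using hfg 0 h0 t ht)
  set L := dist (f 0) (f D)
  have hfrom0 : ∀ s ∈ Icc 0 D, dist (f 0) (f s) * D = s * L := fun s hs => by
    obtain ⟨hadd, hratio⟩ := hsplit s hs D ⟨hD.le, le_rfl⟩ hs.2
    linear_combination hratio + s * hadd.symm
  refine ⟨L / D, by positivity, fun s hs t ht => ?_⟩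
  wlog hst : s ≤ t generalizing s t
  · rw [dist_comm, abs_sub_comm]; exact this t ht s hs (le_of_not_ge hst)
  have hadd := (hsplit s hs t ht hst).1
  rw [abs_of_nonpos (sub_nonpos.2 hst), div_mul_eq_mul_div, eq_div_iff hD.ne']
  linear_combination hfrom0 t ht - hfrom0 s hs - D * hadd

lemma exists_isGeodesicSeg_of_dist_eq_mul {f : ℝ → X} {D k : ℝ} (hD : 0 ≤ D) (hk : 0 ≤ k)
    (hf : ∀ s ∈ Icc 0 D, ∀ t ∈ Icc 0 D, dist (f s) (f t) = k * |s - t|) :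
    ∃ γ : ℝ → X, IsGeodesicSeg γ (f 0) (f D) ∧ ∀ u ∈ Icc 0 D, γ (k * u) = f u := by
  have h0 : (0 : ℝ) ∈ Icc 0 D := ⟨le_rfl, hD⟩
  have hL : dist (f 0) (f D) = k * D := by
    simpa [abs_of_nonneg hD] using hf 0 h0 D ⟨hD, le_rfl⟩
  have hback : ∀ u ∈ Icc 0 D, f (k * u / k) = f u := by
    intro u hu
    rcases hk.eq_or_lt with rfl | hk
    · simpa [eq_comm] using hf 0 h0 u hu
    · rw [mul_div_cancel_left₀ _ hk.ne']
  -- For `k = 0` this is the constant path at `f 0`, since `s / 0 = 0`.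
  refine ⟨fun s => f (s / k), ⟨by simp, hL ▸ hback D ⟨hD, le_rfl⟩, ?_⟩, hback⟩
  intro s hs t ht
  rw [hL] at hs ht
  rcases hk.eq_or_lt with rfl | hk
  · obtain rfl : s = t := by
      simp only [zero_mul, Icc_self, mem_singleton_iff] at hs ht
      rw [hs, ht]
    simp
  have hmem : ∀ s ∈ Icc 0 (k * D), s / k ∈ Icc 0 D := fun s hs =>
    ⟨div_nonneg hs.1 hk.le, (div_le_iff₀' hk).2 hs.2⟩
  rw [hf _ (hmem s hs) _ (hmem t ht), ← sub_div, abs_div, abs_of_pos hk,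
    mul_div_cancel₀ _ hk.ne']

lemma exists_isGeodesicSeg_of_sq_dist_add_sq_dist {f : ℝ → Y} {g : ℝ → Z} {D : ℝ}
    (hD : 0 ≤ D)
    (hfg : ∀ s ∈ Icc 0 D, ∀ t ∈ Icc 0 D,
      dist (f s) (f t) ^ 2 + dist (g s) (g t) ^ 2 = (s - t) ^ 2) :
    ∃ γ : ℝ → Y, IsGeodesicSeg γ (f 0) (f D) ∧
      ∀ t ∈ Icc (0 : ℝ) 1, γ (t * dist (f 0) (f D)) = f (t * D) := by
  obtain ⟨k, hk, hf⟩ := exists_dist_eq_mul_of_sq_dist_add_sq_dist hfg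
  obtain ⟨γ, hγ, hγf⟩ := exists_isGeodesicSeg_of_dist_eq_mul hD hk hf
  refine ⟨γ, hγ, fun t ht => ?_⟩
  rw [hf 0 ⟨le_rfl, hD⟩ D ⟨hD, le_rfl⟩, zero_sub, abs_neg, abs_of_nonneg hD,
    ← hγf _ ⟨mul_nonneg ht.1 hD, mul_le_of_le_one_left hD ht.2⟩, mul_left_comm]

namespace IsGeodesicSeg

variable {a b : WithLp 2 (Y × Z)} {α : ℝ → WithLp 2 (Y × Z)}

lemma sq_dist_fst_add_sq_dist_snd (hα : IsGeodesicSeg α a b) :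
    ∀ s ∈ Icc 0 (dist a b), ∀ t ∈ Icc 0 (dist a b),
      dist (α s).ofLp.1 (α t).ofLp.1 ^ 2 + dist (α s).ofLp.2 (α t).ofLp.2 ^ 2 = (s - t) ^ 2 :=
  fun s hs t ht => by rw [← WithLp.prod_dist_sq_eq_of_L2, hα.2.2 s hs t ht, sq_abs]

lemma exists_fst (hα : IsGeodesicSeg α a b) :
    ∃ γ : ℝ → Y, IsGeodesicSeg γ a.ofLp.1 b.ofLp.1 ∧
      ∀ t ∈ Icc (0 : ℝ) 1, γ (t * dist a.ofLp.1 b.ofLp.1) = (α (t * dist a b)).ofLp.1 := by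
  simpa only [hα.1, hα.2.1] using exists_isGeodesicSeg_of_sq_dist_add_sq_dist
    (f := fun s => (α s).ofLp.1) (g := fun s => (α s).ofLp.2) dist_nonneg
    hα.sq_dist_fst_add_sq_dist_snd

lemma exists_snd (hα : IsGeodesicSeg α a b) :
    ∃ γ : ℝ → Z, IsGeodesicSeg γ a.ofLp.2 b.ofLp.2 ∧
      ∀ t ∈ Icc (0 : ℝ) 1, γ (t * dist a.ofLp.2 b.ofLp.2) = (α (t * dist a b)).ofLp.2 := by
  have hsnd := exists_isGeodesicSeg_of_sq_dist_add_sq_dist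
    (f := fun s => (α s).ofLp.2) (g := fun s => (α s).ofLp.1) dist_nonneg
    fun s hs t ht => by rw [add_comm]; exact hα.sq_dist_fst_add_sq_dist_snd s hs t ht
  simpa only [hα.1, hα.2.1] using hsnd

end IsGeodesicSeg

end Geodesic

/-- Let `Y`, `Z` be CAT(0) spaces and give `Y × Z` the ℓ² product metric
(`WithLp 2 (Y × Z)`). If a geodesic triangle `(a,b,c)` in the product satisfies the
flatness condition — for each `t ∈ (0,1)`, the points `e = α (t·d(a,b))` on `[a,b]`
and `f = β (t·d(a,c))` on `[a,c]` satisfy `d(e,f) = t·d(b,c)` — then the projected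
triangles in `Y` and in `Z` satisfy it as well; in particular
`d(e_i, f_i) = t·d(b_i, c_i)` for `i = 1, 2`. -/
theorem flat_triangle_in_product_projects_flat
    {Y Z : Type*} [MetricSpace Y] [MetricSpace Z]
    (hY : IsCAT0 Y) (hZ : IsCAT0 Z)
    (a b c : WithLp 2 (Y × Z)) (α β : ℝ → WithLp 2 (Y × Z))
    (hα : IsGeodesicSeg α a b) (hβ : IsGeodesicSeg β a c)
    (hflat : ∀ t ∈ Set.Ioo (0 : ℝ) 1,
      dist (α (t * dist a b)) (β (t * dist a c)) = t * dist b c) :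
    ∀ t ∈ Set.Ioo (0 : ℝ) 1,
      dist (α (t * dist a b)).ofLp.1 (β (t * dist a c)).ofLp.1 = t * dist b.ofLp.1 c.ofLp.1 ∧
      dist (α (t * dist a b)).ofLp.2 (β (t * dist a c)).ofLp.2 = t * dist b.ofLp.2 c.ofLp.2 := by
  intro t ht
  have ht' : t ∈ Icc (0 : ℝ) 1 := Ioo_subset_Icc_self ht
  obtain ⟨γ₁, hγ₁, hγ₁t⟩ := hα.exists_fst
  obtain ⟨δ₁, hδ₁, hδ₁t⟩ := hβ.exists_fst
  obtain ⟨γ₂, hγ₂, hγ₂t⟩ := hα.exists_snd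
  obtain ⟨δ₂, hδ₂, hδ₂t⟩ := hβ.exists_snd
  have h₁ := hY.dist_le hγ₁ hδ₁ ht'
  have h₂ := hZ.dist_le hγ₂ hδ₂ ht'
  rw [hγ₁t t ht', hδ₁t t ht'] at h₁
  rw [hγ₂t t ht', hδ₂t t ht'] at h₂
  refine eq_and_eq_of_sq_add_sq_eq dist_nonneg dist_nonneg h₁ h₂ ?_
  rw [← WithLp.prod_dist_sq_eq_of_L2, hflat t ht, mul_pow, mul_pow, mul_pow,
    WithLp.prod_dist_sq_eq_of_L2, mul_add]
end

section
/- Let Z be a compact Hausdorff space and G a group acting on Z by homeomorphisms as a discrete convergence group, meaning: for every sequence of distinct elements of G there is a subsequence (g_i) and points n, p ∈ Z such that g_i(x) → p uniformly on compact subsets of Z \ {n}. Suppose Ω ⊆ Z is an open G-invariant set such that for every n, p arising as above from sequences in G, n ∉ Ω and p ∉ Ω. Then the action of G on Ω is properly discontinuous: for every compact K ⊆ Ω, the set {g ∈ G : g(K) ∩ K ≠ ∅} is finite. -/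
/-!
If infinitely many `g` moved a point of the compact set `K ⊆ Ω` back into `K`, they would
form an injective sequence, and the convergence property gives a subsequence converging to
`p` off `n`. Both points lie outside `Ω ⊇ K`, so eventually the subsequence pushes all of
`K` into the neighbourhood `Kᶜ` of `p`, contradicting the choice of the sequence.
-/

open Filter Set

/-- The sequence `(u i)` of homeomorphisms converges to the point `p` uniformly on
compact subsets of `Z \ {n}`: for every compact `K ⊆ Z \ {n}` and every neighborhood
`U` of `p`, eventually `u i • K ⊆ U`. -/
def ConvergesTo {G Z : Type*} [Group G] [TopologicalSpace Z] [MulAction G Z]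
    (u : ℕ → G) (n p : Z) : Prop :=
  ∀ K : Set Z, IsCompact K → n ∉ K →
    ∀ U ∈ nhds p, ∀ᶠ i in atTop, ∀ x ∈ K, u i • x ∈ U

theorem ConvergesTo.eventually_forall_smul_notMem {G Z : Type*} [Group G] [TopologicalSpace Z]
    [MulAction G Z] {u : ℕ → G} {n p : Z} (h : ConvergesTo u n p) {K L : Set Z}
    (hK : IsCompact K) (hnK : n ∉ K) (hL : IsClosed L) (hpL : p ∉ L) :
    ∀ᶠ i in atTop, ∀ x ∈ K, u i • x ∉ L :=
  h K hK hnK Lᶜ (hL.isOpen_compl.mem_nhds hpL)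

theorem Set.Infinite.exists_injective_nat {α : Type*} {s : Set α} (hs : s.Infinite) :
    ∃ u : ℕ → α, Function.Injective u ∧ ∀ i, u i ∈ s :=
  ⟨fun i => hs.natEmbedding s i, Subtype.val_injective.comp (hs.natEmbedding s).injective,
    fun i => (hs.natEmbedding s i).2⟩

theorem convergence_group_properly_discontinuous_general
    {G Z : Type*} [Group G] [TopologicalSpace Z] [T2Space Z]
    [MulAction G Z]
    (hconv : ∀ u : ℕ → G, Function.Injective u →
      ∃ φ : ℕ → ℕ, StrictMono φ ∧ ∃ n p : Z, ConvergesTo (u ∘ φ) n p)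
    (Ω : Set Z)
    (hΩavoid : ∀ (u : ℕ → G) (n p : Z), Function.Injective u →
      ConvergesTo u n p → n ∉ Ω ∧ p ∉ Ω) :
    ∀ K : Set Z, IsCompact K → K ⊆ Ω →
      {g : G | ∃ x ∈ K, g • x ∈ K}.Finite := by
  intro K hK hKΩ
  by_contra hinf
  obtain ⟨u, hu_inj, hu_mem⟩ := Set.Infinite.exists_injective_nat hinf
  obtain ⟨φ, hφ, n, p, hc⟩ := hconv u hu_inj
  obtain ⟨hnΩ, hpΩ⟩ := hΩavoid _ n p (hu_inj.comp hφ.injective) hc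
  obtain ⟨i, hi⟩ := (hc.eventually_forall_smul_notMem hK (notMem_subset hKΩ hnΩ)
    hK.isClosed (notMem_subset hKΩ hpΩ)).exists
  obtain ⟨x, hxK, hx⟩ := hu_mem (φ i)
  exact hi x hxK hx

/-- Let `Z` be a compact Hausdorff space and `G` a group acting on `Z` by
homeomorphisms as a discrete convergence group: every sequence of distinct elements of
`G` has a subsequence `(g_i)` with attracting/repelling points `p, n ∈ Z` such that
`g_i → p` uniformly on compact subsets of `Z \ {n}`.  If `Ω ⊆ Z` is an open
`G`-invariant set avoiding all such points `n, p`, then `G` acts properly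
discontinuously on `Ω`: for every compact `K ⊆ Ω`, the set
`{g ∈ G : g K ∩ K ≠ ∅}` is finite. -/
theorem convergence_group_properly_discontinuous
    {G Z : Type*} [Group G] [TopologicalSpace Z] [CompactSpace Z] [T2Space Z]
    [MulAction G Z] (hcont : ∀ g : G, Continuous fun z : Z => g • z)
    (hconv : ∀ u : ℕ → G, Function.Injective u →
      ∃ φ : ℕ → ℕ, StrictMono φ ∧ ∃ n p : Z, ConvergesTo (u ∘ φ) n p)
    (Ω : Set Z) (hΩopen : IsOpen Ω) (hΩinv : ∀ (g : G), ∀ x ∈ Ω, g • x ∈ Ω)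
    (hΩavoid : ∀ (u : ℕ → G) (n p : Z), Function.Injective u →
      ConvergesTo u n p → n ∉ Ω ∧ p ∉ Ω) :
    ∀ K : Set Z, IsCompact K → K ⊆ Ω →
      {g : G | ∃ x ∈ K, g • x ∈ K}.Finite :=
  convergence_group_properly_discontinuous_general hconv Ω hΩavoid
end

section
/- Let X be a complete CAT(0) space, v ∈ ∂X, R a geodesic ray from a point y to v, and b_R the Busemann function of R. Let H = b_R^{-1}((−∞,−1]) be a horoball centered at v. Then every boundary point w ∈ ∂X lying in the closure of H (in X ∪ ∂X with the cone topology) satisfies ∠(v,w) ≤ π/2; equivalently, H̄ ∩ ∂X ⊆ B̄_T(v, π/2). -/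
open Filter Set

/-!
Far along the ray `R`, a point `x` of the horoball is closer to `R u` than `R 0` is, so in the
comparison triangle for `(R 0, R u, x)` the side opposite `R 0` is at most `u`, and the comparison
angle at `R 0` is at most `π/2`. By CAT(0) comparison,
`d(R s, γ t) ≤ √(s² + t²)` for every point `γ t` on the geodesic from `R 0` to `x`; this bound
passes to the limit ray `S`, and it says exactly that the comparison angle `∠̄(R s, S t)` is at
most `π/2`.
-/

theorem compAngle_le_pi_div_two {a b c : ℝ} (ha : 0 ≤ a) (hb : 0 ≤ b)
    (h : c ^ 2 ≤ a ^ 2 + b ^ 2) : compAngle a b c ≤ Real.pi / 2 :=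
  Real.arccos_le_pi_div_two.mpr (div_nonneg (by linarith) (by positivity))

theorem compDist_le_sqrt_of_compAngle_le_pi_div_two {a b c s t : ℝ}
    (h : compAngle a b c ≤ Real.pi / 2) (hs : 0 ≤ s) (ht : 0 ≤ t) :
    compDist a b c s t ≤ √(s ^ 2 + t ^ 2) := by
  have hangle : 0 ≤ compAngle a b c := Real.arccos_nonneg _
  have hcos : 0 ≤ Real.cos (compAngle a b c) :=
    Real.cos_nonneg_of_mem_Icc ⟨by linarith [Real.pi_pos], h⟩
  exact Real.sqrt_le_sqrt (by nlinarith [mul_nonneg (mul_nonneg hs ht) hcos])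

theorem IsCAT0.dist_le_sqrt_of_compAngle_le_pi_div_two {X : Type*} [MetricSpace X]
    (hX : IsCAT0 X) {a b c : X} {α β : ℝ → X} (hα : IsGeodesicSeg α a b)
    (hβ : IsGeodesicSeg β a c)
    (hangle : compAngle (dist a b) (dist a c) (dist b c) ≤ Real.pi / 2)
    {s t : ℝ} (hs : s ∈ Icc 0 (dist a b)) (ht : t ∈ Icc 0 (dist a c)) :
    dist (α s) (β t) ≤ √(s ^ 2 + t ^ 2) :=
  (hX.2 a b c α β hα hβ s hs t ht).trans
    (compDist_le_sqrt_of_compAngle_le_pi_div_two hangle hs.1 ht.1)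

section Ray

variable {X : Type*} [MetricSpace X] {R : ℝ → X}
  (hR : ∀ s t : ℝ, 0 ≤ s → 0 ≤ t → dist (R s) (R t) = |s - t|)
include hR

theorem dist_ray_zero {u : ℝ} (hu : 0 ≤ u) : dist (R 0) (R u) = u := by
  rw [hR 0 u le_rfl hu, zero_sub, abs_neg, abs_of_nonneg hu]

theorem isGeodesicSeg_ray {u : ℝ} (hu : 0 ≤ u) : IsGeodesicSeg R (R 0) (R u) :=
  ⟨rfl, by rw [dist_ray_zero hR hu], fun s hs t ht => hR s t hs.1 ht.1⟩

theorem IsCAT0.dist_ray_geodesicSeg_le_sqrt (hX : IsCAT0 X) {x : X}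
    (hx : ∀ᶠ u in atTop, dist x (R u) ≤ u) {γ : ℝ → X} (hγ : IsGeodesicSeg γ (R 0) x)
    {s t : ℝ} (hs : 0 ≤ s) (ht : t ∈ Icc 0 (dist (R 0) x)) :
    dist (R s) (γ t) ≤ √(s ^ 2 + t ^ 2) := by
  obtain ⟨u, hxu, hsu⟩ := (hx.and (eventually_ge_atTop s)).exists
  have hu : 0 ≤ u := hs.trans hsu
  have hangle : compAngle (dist (R 0) (R u)) (dist (R 0) x) (dist (R u) x) ≤ Real.pi / 2 := by
    rw [dist_ray_zero hR hu, dist_comm (R u)]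
    exact compAngle_le_pi_div_two hu dist_nonneg
      (by nlinarith [dist_nonneg (x := x) (y := R u), sq_nonneg (dist (R 0) x)])
  exact hX.dist_le_sqrt_of_compAngle_le_pi_div_two (isGeodesicSeg_ray hR hu) hγ hangle
    ⟨hs, by rwa [dist_ray_zero hR hu]⟩ ht

end Ray

theorem horoball_boundary_in_half_tits_ball_general
    {X : Type*} [MetricSpace X] (hX : IsCAT0 X)
    (R : ℝ → X) (hR : ∀ s t : ℝ, 0 ≤ s → 0 ≤ t → dist (R s) (R t) = |s - t|)
    (b : X → ℝ)
    (hb : ∀ x : X, Tendsto (fun t : ℝ => dist x (R t) - t) atTop (nhds (b x)))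
    (S : ℝ → X)
    (x : ℕ → X) (hxH : ∀ k, b (x k) ≤ -1)
    (γ : ℕ → ℝ → X) (hγ : ∀ k, IsGeodesicSeg (γ k) (R 0) (x k))
    (hfar : Tendsto (fun k => dist (R 0) (x k)) atTop atTop)
    (hconv : ∀ t : ℝ, 0 ≤ t → Tendsto (fun k => γ k t) atTop (nhds (S t))) :
    ∀ s t : ℝ, 0 < s → 0 < t →
      compAngle s t (dist (R s) (S t)) ≤ Real.pi / 2 := by
  intro s t hs ht
  have hnear : ∀ k, ∀ᶠ u in atTop, dist (x k) (R u) ≤ u := fun k =>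
    ((hb (x k)).eventually_le_const (by linarith [hxH k] : b (x k) < 0)).mono
      fun _ => sub_nonpos.mp
  have hdist : dist (R s) (S t) ≤ √(s ^ 2 + t ^ 2) := by
    refine le_of_tendsto (tendsto_const_nhds.dist (hconv t ht.le)) ?_
    filter_upwards [hfar.eventually_ge_atTop t] with k hkt
    exact hX.dist_ray_geodesicSeg_le_sqrt hR (hnear k) (hγ k) hs.le ⟨ht.le, hkt⟩
  exact compAngle_le_pi_div_two hs.le ht.le
    ((Real.le_sqrt dist_nonneg (by positivity)).mp hdist)

/-- Let `X` be a complete CAT(0) space, `R` a unit-speed geodesic ray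
(from `y = R 0` to `v = R(∞) ∈ ∂X`), `b` its Busemann function, and
`H = b⁻¹((-∞,-1])` the corresponding horoball centered at `v`.  If `w ∈ ∂X` lies in
the closure of `H` in the cone topology — i.e. `w` is represented by a unit-speed
ray `S` from `y` which is the limit, uniformly on compacta, of geodesics from `y` to
points `x k ∈ H` with `dist y (x k) → ∞` — then `∠(v,w) ≤ π/2`: every comparison
angle `∠̄_y(R s, S t)` is at most `π/2` (equivalently,
`H̄ ∩ ∂X ⊆ B̄_T(v, π/2)`). -/
theorem horoball_boundary_in_half_tits_ball
    {X : Type*} [MetricSpace X] [CompleteSpace X] (hX : IsCAT0 X)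
    (R : ℝ → X) (hR : ∀ s t : ℝ, 0 ≤ s → 0 ≤ t → dist (R s) (R t) = |s - t|)
    (b : X → ℝ)
    (hb : ∀ x : X, Tendsto (fun t : ℝ => dist x (R t) - t) atTop (nhds (b x)))
    (S : ℝ → X) (hS0 : S 0 = R 0)
    (hS : ∀ s t : ℝ, 0 ≤ s → 0 ≤ t → dist (S s) (S t) = |s - t|)
    (x : ℕ → X) (hxH : ∀ k, b (x k) ≤ -1)
    (γ : ℕ → ℝ → X) (hγ : ∀ k, IsGeodesicSeg (γ k) (R 0) (x k))
    (hfar : Tendsto (fun k => dist (R 0) (x k)) atTop atTop)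
    (hconv : ∀ t : ℝ, 0 ≤ t → Tendsto (fun k => γ k t) atTop (nhds (S t))) :
    ∀ s t : ℝ, 0 < s → 0 < t →
      compAngle s t (dist (R s) (S t)) ≤ Real.pi / 2 :=
  horoball_boundary_in_half_tits_ball_general hX R hR b hb S x hxH γ hγ hfar hconv
end
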